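/- arXiv:2510.09345 — 4 statements merged into one kernel-verified Lean document; each statement's English description precedes it below -/
import Mathlib

section
/- Let γ : I → 𝕃⁴ be a time-like curve parametrized by proper time. If γ admits a generalized Bishop frame of type F, then γ admits a generalized Bishop frame of type D. -/
open Set Real

noncomputable section

/-- The Minkowski form on `ℝ⁴ = 𝕃⁴`: `⟨x,y⟩ = -x₀y₀ + x₁y₁ + x₂y₂ + x₃y₃`. -/
def mink (x y : Fin 4 → ℝ) : ℝ :=
  -(x 0 * y 0) + x 1 * y 1 + x 2 * y 2 + x 3 * y 3

/-- `(T, Z₁, Z₂, Z₃)` is an orthonormal frame along a time-like curve with tangent `T`: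
the `Zᵢ` are smooth on `I`, pairwise orthonormal (space-like) and orthogonal to `T`. -/
def OrthFrame (I : Set ℝ) (T Z₁ Z₂ Z₃ : ℝ → Fin 4 → ℝ) : Prop :=
  ContDiffOn ℝ (⊤ : ℕ∞) Z₁ I ∧ ContDiffOn ℝ (⊤ : ℕ∞) Z₂ I ∧ ContDiffOn ℝ (⊤ : ℕ∞) Z₃ I ∧
  ∀ s ∈ I,
    mink (Z₁ s) (Z₁ s) = 1 ∧ mink (Z₂ s) (Z₂ s) = 1 ∧ mink (Z₃ s) (Z₃ s) = 1 ∧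
    mink (Z₁ s) (Z₂ s) = 0 ∧ mink (Z₁ s) (Z₃ s) = 0 ∧ mink (Z₂ s) (Z₃ s) = 0 ∧
    mink (T s) (Z₁ s) = 0 ∧ mink (T s) (Z₂ s) = 0 ∧ mink (T s) (Z₃ s) = 0

/-- `γ` is a smooth time-like curve parametrized by proper time on `I`. -/
def ProperTime (I : Set ℝ) (γ : ℝ → Fin 4 → ℝ) : Prop :=
  ContDiffOn ℝ (⊤ : ℕ∞) γ I ∧ ∀ s ∈ I, mink (deriv γ s) (deriv γ s) = -1

/-- Three smooth real functions on `I`. -/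
def Smooth3 (I : Set ℝ) (x₁ x₂ x₃ : ℝ → ℝ) : Prop :=
  ContDiffOn ℝ (⊤ : ℕ∞) x₁ I ∧ ContDiffOn ℝ (⊤ : ℕ∞) x₂ I ∧ ContDiffOn ℝ (⊤ : ℕ∞) x₃ I

/-- `γ` admits a generalized Bishop frame of type B. -/
def AdmitsB (I : Set ℝ) (γ : ℝ → Fin 4 → ℝ) : Prop :=
  ∃ (Z₁ Z₂ Z₃ : ℝ → Fin 4 → ℝ) (x₁ x₂ x₃ : ℝ → ℝ),
    OrthFrame I (deriv γ) Z₁ Z₂ Z₃ ∧ Smooth3 I x₁ x₂ x₃ ∧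
    ∀ s ∈ I,
      deriv (deriv γ) s = x₁ s • Z₁ s + x₂ s • Z₂ s + x₃ s • Z₃ s ∧
      deriv Z₁ s = x₁ s • deriv γ s ∧
      deriv Z₂ s = x₂ s • deriv γ s ∧
      deriv Z₃ s = x₃ s • deriv γ s

/-- `γ` admits a generalized Bishop frame of type C. -/
def AdmitsC (I : Set ℝ) (γ : ℝ → Fin 4 → ℝ) : Prop :=
  ∃ (Z₁ Z₂ Z₃ : ℝ → Fin 4 → ℝ) (x₁ x₂ x₃ : ℝ → ℝ),
    OrthFrame I (deriv γ) Z₁ Z₂ Z₃ ∧ Smooth3 I x₁ x₂ x₃ ∧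
    ∀ s ∈ I,
      deriv (deriv γ) s = x₁ s • Z₁ s + x₂ s • Z₂ s ∧
      deriv Z₁ s = x₁ s • deriv γ s + x₃ s • Z₃ s ∧
      deriv Z₂ s = x₂ s • deriv γ s ∧
      deriv Z₃ s = (-(x₃ s)) • Z₁ s

/-- `γ` admits a generalized Bishop frame of type D. -/
def AdmitsD (I : Set ℝ) (γ : ℝ → Fin 4 → ℝ) : Prop :=
  ∃ (Z₁ Z₂ Z₃ : ℝ → Fin 4 → ℝ) (x₁ x₂ x₃ : ℝ → ℝ),
    OrthFrame I (deriv γ) Z₁ Z₂ Z₃ ∧ Smooth3 I x₁ x₂ x₃ ∧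
    ∀ s ∈ I,
      deriv (deriv γ) s = x₁ s • Z₁ s ∧
      deriv Z₁ s = x₁ s • deriv γ s + x₂ s • Z₂ s + x₃ s • Z₃ s ∧
      deriv Z₂ s = (-(x₂ s)) • Z₁ s ∧
      deriv Z₃ s = (-(x₃ s)) • Z₁ s

/-- `γ` admits a generalized Bishop frame of type F. -/
def AdmitsF (I : Set ℝ) (γ : ℝ → Fin 4 → ℝ) : Prop :=
  ∃ (Z₁ Z₂ Z₃ : ℝ → Fin 4 → ℝ) (x₁ x₂ x₃ : ℝ → ℝ),
    OrthFrame I (deriv γ) Z₁ Z₂ Z₃ ∧ Smooth3 I x₁ x₂ x₃ ∧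
    ∀ s ∈ I,
      deriv (deriv γ) s = x₁ s • Z₁ s ∧
      deriv Z₁ s = x₁ s • deriv γ s + x₂ s • Z₂ s ∧
      deriv Z₂ s = (-(x₂ s)) • Z₁ s + x₃ s • Z₃ s ∧
      deriv Z₃ s = (-(x₃ s)) • Z₂ s

/-! Rotating `(Z₂, Z₃)` in its plane by an angle `θ` with `θ' = -x₃` turns the frame equations of
type F into those of type D: the rotation speed cancels the coupling `x₃` between `Z₂` and `Z₃`, so
the rotated vectors have derivatives proportional to `Z₁`, while `x₂ Z₂` in `Z₁'` splits into
`x₂ cos θ` and `-x₂ sin θ` times the rotated vectors. Such a `θ` exists because `I` is an interval. -/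

open scoped ContDiff

section Rotation

variable {E : Type*} [AddCommGroup E] [Module ℝ E]

def rotFst (θ : ℝ) (u v : E) : E := cos θ • u + sin θ • v

def rotSnd (θ : ℝ) (u v : E) : E := (-sin θ) • u + cos θ • v

theorem smul_rotFst_add_smul_rotSnd (a θ : ℝ) (u v : E) :
    (a * cos θ) • rotFst θ u v + (-(a * sin θ)) • rotSnd θ u v = a • u := by
  simp only [rotFst, rotSnd]
  match_scalars
  · linear_combination a * sin_sq_add_cos_sq θ
  · ring

variable (B : LinearMap.BilinForm ℝ E) {u v : E}

theorem LinearMap.BilinForm.rotFst_rotFst (huu : B u u = 1) (hvv : B v v = 1) (huv : B u v = 0)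
    (hvu : B v u = 0) (θ : ℝ) : B (rotFst θ u v) (rotFst θ u v) = 1 := by
  simp only [rotFst, map_add, map_smul, LinearMap.add_apply, LinearMap.smul_apply, smul_eq_mul,
    huu, hvv, huv, hvu]
  linear_combination cos_sq_add_sin_sq θ

theorem LinearMap.BilinForm.rotSnd_rotSnd (huu : B u u = 1) (hvv : B v v = 1) (huv : B u v = 0)
    (hvu : B v u = 0) (θ : ℝ) : B (rotSnd θ u v) (rotSnd θ u v) = 1 := by
  simp only [rotSnd, map_add, map_smul, LinearMap.add_apply, LinearMap.smul_apply, smul_eq_mul,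
    huu, hvv, huv, hvu]
  linear_combination sin_sq_add_cos_sq θ

theorem LinearMap.BilinForm.rotFst_rotSnd (huu : B u u = 1) (hvv : B v v = 1) (huv : B u v = 0)
    (hvu : B v u = 0) (θ : ℝ) : B (rotFst θ u v) (rotSnd θ u v) = 0 := by
  simp only [rotFst, rotSnd, map_add, map_smul, LinearMap.add_apply, LinearMap.smul_apply,
    smul_eq_mul, huu, hvv, huv, hvu]
  ring

theorem LinearMap.BilinForm.apply_rotFst {w : E} (hwu : B w u = 0) (hwv : B w v = 0) (θ : ℝ) :
    B w (rotFst θ u v) = 0 := by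
  simp [rotFst, hwu, hwv]

theorem LinearMap.BilinForm.apply_rotSnd {w : E} (hwu : B w u = 0) (hwv : B w v = 0) (θ : ℝ) :
    B w (rotSnd θ u v) = 0 := by
  simp [rotSnd, hwu, hwv]

end Rotation

section RotationDeriv

variable {F : Type*} [NormedAddCommGroup F] [NormedSpace ℝ F] {θ : ℝ → ℝ} {u v : ℝ → F}
  {θ' s : ℝ} {u' v' : F}

theorem HasDerivAt.rotFst (hθ : HasDerivAt θ θ' s) (hu : HasDerivAt u u' s)
    (hv : HasDerivAt v v' s) :
    HasDerivAt (fun t => _root_.rotFst (θ t) (u t) (v t))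
      (_root_.rotFst (θ s) u' v' + θ' • _root_.rotSnd (θ s) (u s) (v s)) s := by
  refine ((hθ.cos.smul hu).add (hθ.sin.smul hv)).congr_deriv ?_
  simp only [_root_.rotFst, _root_.rotSnd]
  module

theorem HasDerivAt.rotSnd (hθ : HasDerivAt θ θ' s) (hu : HasDerivAt u u' s)
    (hv : HasDerivAt v v' s) :
    HasDerivAt (fun t => _root_.rotSnd (θ t) (u t) (v t))
      (_root_.rotSnd (θ s) u' v' - θ' • _root_.rotFst (θ s) (u s) (v s)) s := by
  refine ((hθ.sin.neg.smul hu).add (hθ.cos.smul hv)).congr_deriv ?_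
  simp only [_root_.rotFst, _root_.rotSnd, Pi.neg_apply]
  module

end RotationDeriv

theorem exists_hasDerivAt_of_continuousOn {I : Set ℝ} (hI : IsOpen I) (hI' : I.OrdConnected)
    {g : ℝ → ℝ} (hg : ContinuousOn g I) : ∃ θ : ℝ → ℝ, ∀ s ∈ I, HasDerivAt θ (g s) s := by
  rcases I.eq_empty_or_nonempty with rfl | ⟨a, ha⟩
  · exact ⟨0, by simp⟩
  exact ⟨fun u => ∫ t in a..u, g t, fun s hs =>
    intervalIntegral.integral_hasDerivAt_right
      ((hg.mono (hI'.uIcc_subset ha hs)).intervalIntegrable)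
      (hg.stronglyMeasurableAtFilter hI s hs) (hg.continuousAt (hI.mem_nhds hs))⟩

theorem contDiffOn_infty_of_hasDerivAt {I : Set ℝ} (hI : IsOpen I) {θ g : ℝ → ℝ}
    (hθ : ∀ s ∈ I, HasDerivAt θ (g s) s) (hg : ContDiffOn ℝ ∞ g I) : ContDiffOn ℝ ∞ θ I := by
  rw [contDiffOn_infty_iff_deriv_of_isOpen hI]
  exact ⟨fun s hs => (hθ s hs).differentiableAt.differentiableWithinAt,
    hg.congr fun s hs => (hθ s hs).deriv⟩

def minkForm : LinearMap.BilinForm ℝ (Fin 4 → ℝ) :=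
  LinearMap.mk₂ ℝ mink (fun _ _ _ => by simp only [mink, Pi.add_apply]; ring)
    (fun _ _ _ => by simp only [mink, Pi.smul_apply, smul_eq_mul]; ring)
    (fun _ _ _ => by simp only [mink, Pi.add_apply]; ring)
    (fun _ _ _ => by simp only [mink, Pi.smul_apply, smul_eq_mul]; ring)

@[simp] theorem minkForm_apply (x y : Fin 4 → ℝ) : minkForm x y = mink x y := rfl

theorem mink_comm (x y : Fin 4 → ℝ) : mink x y = mink y x := by
  unfold mink; ring

theorem OrthFrame.rotate {I : Set ℝ} {T Z₁ Z₂ Z₃ : ℝ → Fin 4 → ℝ} {θ : ℝ → ℝ}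
    (h : OrthFrame I T Z₁ Z₂ Z₃) (hθ : ContDiffOn ℝ ∞ θ I) :
    OrthFrame I T Z₁ (fun s => rotFst (θ s) (Z₂ s) (Z₃ s))
      (fun s => rotSnd (θ s) (Z₂ s) (Z₃ s)) := by
  obtain ⟨hZ₁, hZ₂, hZ₃, horth⟩ := h
  have hcos := contDiff_cos.comp_contDiffOn hθ
  have hsin := contDiff_sin.comp_contDiffOn hθ
  refine ⟨hZ₁, (hcos.smul hZ₂).add (hsin.smul hZ₃), (hsin.neg.smul hZ₂).add (hcos.smul hZ₃),
    fun s hs => ?_⟩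
  obtain ⟨h11, h22, h33, h12, h13, h23, hT1, hT2, hT3⟩ := horth s hs
  simp only [← minkForm_apply] at *
  have h32 : minkForm (Z₃ s) (Z₂ s) = 0 := by rwa [minkForm_apply, mink_comm, ← minkForm_apply]
  exact ⟨h11, minkForm.rotFst_rotFst h22 h33 h23 h32 _, minkForm.rotSnd_rotSnd h22 h33 h23 h32 _,
    minkForm.apply_rotFst h12 h13 _, minkForm.apply_rotSnd h12 h13 _,
    minkForm.rotFst_rotSnd h22 h33 h23 h32 _, hT1, minkForm.apply_rotFst hT2 hT3 _,
    minkForm.apply_rotSnd hT2 hT3 _⟩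

theorem stmt_0_general (I : Set ℝ) (hIopen : IsOpen I) (hIconn : I.OrdConnected)
    (γ : ℝ → Fin 4 → ℝ) (hF : AdmitsF I γ) :
    AdmitsD I γ := by
  obtain ⟨Z₁, Z₂, Z₃, x₁, x₂, x₃, hframe, ⟨hx₁, hx₂, hx₃⟩, heqs⟩ := hF
  have ⟨_, hsmooth₂, hsmooth₃, _⟩ := hframe
  obtain ⟨θ, hθ'⟩ := exists_hasDerivAt_of_continuousOn hIopen hIconn hx₃.neg.continuousOn
  have hθ : ContDiffOn ℝ ∞ θ I := contDiffOn_infty_of_hasDerivAt hIopen hθ' hx₃.neg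
  have hZ' {Z : ℝ → Fin 4 → ℝ} (hZ : ContDiffOn ℝ ∞ Z I) {s : ℝ} (hs : s ∈ I) :
      HasDerivAt Z (deriv Z s) s :=
    ((hZ.differentiableOn (by simp)).differentiableAt (hIopen.mem_nhds hs)).hasDerivAt
  refine ⟨Z₁, fun s => rotFst (θ s) (Z₂ s) (Z₃ s), fun s => rotSnd (θ s) (Z₂ s) (Z₃ s),
    x₁, fun s => x₂ s * cos (θ s), fun s => -(x₂ s * sin (θ s)), hframe.rotate hθ,
    ⟨hx₁, hx₂.mul (contDiff_cos.comp_contDiffOn hθ),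
      (hx₂.mul (contDiff_sin.comp_contDiffOn hθ)).neg⟩,
    fun s hs => ?_⟩
  obtain ⟨hT, hZ₁, hZ₂, hZ₃⟩ := heqs s hs
  have hd₂ := hZ' hsmooth₂ hs
  have hd₃ := hZ' hsmooth₃ hs
  refine ⟨hT, ?_, ?_, ?_⟩
  · rw [hZ₁, add_assoc, smul_rotFst_add_smul_rotSnd]
  · rw [((hθ' s hs).rotFst hd₂ hd₃).deriv, hZ₂, hZ₃]
    simp only [rotFst, rotSnd]
    module
  · rw [((hθ' s hs).rotSnd hd₂ hd₃).deriv, hZ₂, hZ₃]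
    simp only [rotFst, rotSnd]
    module

/-- If a time-like curve parametrized by proper time admits a generalized
Bishop frame of type F, then it admits a generalized Bishop frame of type D. -/
theorem stmt_0 (I : Set ℝ) (hIopen : IsOpen I) (hIconn : I.OrdConnected)
    (γ : ℝ → Fin 4 → ℝ) (hγ : ProperTime I γ) (hF : AdmitsF I γ) :
    AdmitsD I γ :=
  stmt_0_general I hIopen hIconn γ hF
end
end

section
/- There exist an open interval I ⊆ ℝ and a time-like curve γ : I → 𝕃⁴ parametrized by proper time that admits a generalized Bishop frame of type C but does not admit a generalized Bishop frame of type D. -/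
open Set Real

noncomputable section

/-!
Let `u = expNegInvGlue (-·)` and `v = expNegInvGlue`: smooth, flat, and supported on `s ≤ 0` and
`s ≥ 0` respectively, so `u v = 0`. Then `T = (cosh u cosh v, sinh u, sinh v, 0)` is a unit
time-like field, and `γ` is its primitive. The boosted vectors `Z₁ = (sinh u, cosh u, 0, 0)`,
`Z₂ = (sinh v, 0, cosh v, 0)` and `Z₃ = e₃` form a type-C frame with `T' = u' Z₁ + v' Z₂`.
A type-D frame would need a continuous unit vector field `W` with `T' = x₁ W`. Since `T'` is a
nonzero multiple of `Z₁` on `s < 0` and of `Z₂` on `s > 0`, such a `W` would be parallel to `Z₁`,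
then to `Z₂`, and by continuity every coordinate of `W 0` would vanish, contradicting `⟨W, W⟩ = 1`.
-/

open Topology

namespace BishopCNotD

theorem hasDerivAt_vec4 {f₀ f₁ f₂ f₃ : ℝ → ℝ} {a₀ a₁ a₂ a₃ s : ℝ} (h₀ : HasDerivAt f₀ a₀ s)
    (h₁ : HasDerivAt f₁ a₁ s) (h₂ : HasDerivAt f₂ a₂ s) (h₃ : HasDerivAt f₃ a₃ s) :
    HasDerivAt (fun t => ![f₀ t, f₁ t, f₂ t, f₃ t]) ![a₀, a₁, a₂, a₃] s := by
  rw [hasDerivAt_pi]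
  intro i
  fin_cases i <;> assumption

theorem contDiff_vec4 {n : WithTop ℕ∞} {f₀ f₁ f₂ f₃ : ℝ → ℝ} (h₀ : ContDiff ℝ n f₀)
    (h₁ : ContDiff ℝ n f₁) (h₂ : ContDiff ℝ n f₂) (h₃ : ContDiff ℝ n f₃) :
    ContDiff ℝ n (fun t => ![f₀ t, f₁ t, f₂ t, f₃ t]) := by
  rw [contDiff_pi]
  intro i
  fin_cases i <;> assumption

theorem contDiff_integral_right {E : Type*} [NormedAddCommGroup E] [NormedSpace ℝ E]
    [CompleteSpace E] {f : ℝ → E} (hf : ContDiff ℝ (⊤ : ℕ∞) f) (a : ℝ) :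
    ContDiff ℝ (⊤ : ℕ∞) (fun s => ∫ t in a..s, f t) := by
  refine contDiff_infty_iff_deriv.2 ⟨fun s => ?_, ?_⟩
  · exact (hf.continuous.integral_hasStrictDerivAt a s).hasDerivAt.differentiableAt
  · rwa [funext (hf.continuous.deriv_integral f a)]

theorem eq_zero_or_deriv_eq_zero {𝕜 F M : Type*} [NontriviallyNormedField 𝕜]
    [NormedAddCommGroup F] [NormedSpace 𝕜 F] [TopologicalSpace M] [T1Space M] [Zero M]
    {f : 𝕜 → M} {g : 𝕜 → F} (hf : Continuous f) (h : ∀ s, f s = 0 ∨ g s = 0) (s : 𝕜) :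
    f s = 0 ∨ deriv g s = 0 := by
  refine or_iff_not_imp_left.2 fun hfs => ?_
  have hg : g =ᶠ[𝓝 s] fun _ => 0 :=
    (hf.continuousAt.eventually_ne hfs).mono fun t ht => (h t).resolve_left ht
  rw [hg.deriv_eq, deriv_const]

theorem exists_eq_smul_of_smul_eq_smul {K E : Type*} [Field K] [AddCommGroup E] [Module K E]
    {x y : K} {w z : E} (h : x • w = y • z) (hy : y ≠ 0) (hz : z ≠ 0) : ∃ c : K, w = c • z := by
  have hx : x ≠ 0 := by
    rintro rfl
    exact smul_ne_zero hy hz (by rw [← h, zero_smul])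
  exact ⟨x⁻¹ * y, by rw [mul_smul, ← h, inv_smul_smul₀ hx]⟩

section Frame

variable {u v : ℝ → ℝ}

def tangent (u v : ℝ → ℝ) (s : ℝ) : Fin 4 → ℝ :=
  ![cosh (u s) * cosh (v s), sinh (u s), sinh (v s), 0]

def frame₁ (u : ℝ → ℝ) (s : ℝ) : Fin 4 → ℝ := ![sinh (u s), cosh (u s), 0, 0]

def frame₂ (v : ℝ → ℝ) (s : ℝ) : Fin 4 → ℝ := ![sinh (v s), 0, cosh (v s), 0]

def frame₃ : ℝ → Fin 4 → ℝ := fun _ => ![0, 0, 0, 1]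

def curve (u v : ℝ → ℝ) (s : ℝ) : Fin 4 → ℝ := ∫ t in (0 : ℝ)..s, tangent u v t

theorem mink_tangent_self (huv : ∀ s, u s = 0 ∨ v s = 0) (s : ℝ) :
    mink (tangent u v s) (tangent u v s) = -1 := by
  rcases huv s with h | h <;> simp [mink, tangent, h, ← sq, cosh_sq']

theorem orthFrame_tangent (huv : ∀ s, u s = 0 ∨ v s = 0) (hu : ContDiff ℝ (⊤ : ℕ∞) u)
    (hv : ContDiff ℝ (⊤ : ℕ∞) v) :
    OrthFrame univ (tangent u v) (frame₁ u) (frame₂ v) frame₃ := by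
  refine ⟨(contDiff_vec4 hu.sinh hu.cosh contDiff_const contDiff_const).contDiffOn,
    (contDiff_vec4 hv.sinh contDiff_const hv.cosh contDiff_const).contDiffOn,
    contDiff_const.contDiffOn, fun s _ => ?_⟩
  rcases huv s with h | h <;>
    simp [mink, tangent, frame₁, frame₂, frame₃, h, ← sq, cosh_sq', mul_comm]

theorem contDiff_tangent (hu : ContDiff ℝ (⊤ : ℕ∞) u) (hv : ContDiff ℝ (⊤ : ℕ∞) v) :
    ContDiff ℝ (⊤ : ℕ∞) (tangent u v) :=
  contDiff_vec4 (hu.cosh.mul hv.cosh) hu.sinh hv.sinh contDiff_const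

theorem deriv_curve (hu : ContDiff ℝ (⊤ : ℕ∞) u) (hv : ContDiff ℝ (⊤ : ℕ∞) v) :
    deriv (curve u v) = tangent u v :=
  funext ((contDiff_tangent hu hv).continuous.deriv_integral _ 0)

theorem contDiff_curve (hu : ContDiff ℝ (⊤ : ℕ∞) u) (hv : ContDiff ℝ (⊤ : ℕ∞) v) :
    ContDiff ℝ (⊤ : ℕ∞) (curve u v) :=
  contDiff_integral_right (contDiff_tangent hu hv) 0

variable (huv : ∀ s, u s = 0 ∨ v s = 0) (hu : ContDiff ℝ (⊤ : ℕ∞) u)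
  (hv : ContDiff ℝ (⊤ : ℕ∞) v)
include huv hu hv

theorem properTime_curve : ProperTime univ (curve u v) :=
  ⟨(contDiff_curve hu hv).contDiffOn, fun s _ => by
    rw [deriv_curve hu hv]
    exact mink_tangent_self huv s⟩

theorem hasDerivAt_tangent (s : ℝ) :
    HasDerivAt (tangent u v) (deriv u s • frame₁ u s + deriv v s • frame₂ v s) s := by
  have hdu := (hu.differentiable (by simp) s).hasDerivAt
  have hdv := (hv.differentiable (by simp) s).hasDerivAt
  refine (hasDerivAt_vec4 (hdu.cosh.mul hdv.cosh) hdu.sinh hdv.sinh (hasDerivAt_const s 0) :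
    HasDerivAt (tangent u v) _ s).congr_deriv ?_
  rcases eq_zero_or_deriv_eq_zero hv.continuous (fun t => (huv t).symm) s with h | h <;>
  rcases eq_zero_or_deriv_eq_zero hu.continuous huv s with h' | h' <;>
  ext i <;> fin_cases i <;> simp [frame₁, frame₂, h, h'] <;> ring

theorem hasDerivAt_frame₁ (s : ℝ) : HasDerivAt (frame₁ u) (deriv u s • tangent u v s) s := by
  have hdu := (hu.differentiable (by simp) s).hasDerivAt
  refine (hasDerivAt_vec4 hdu.sinh hdu.cosh (hasDerivAt_const s 0) (hasDerivAt_const s 0) :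
    HasDerivAt (frame₁ u) _ s).congr_deriv ?_
  rcases eq_zero_or_deriv_eq_zero hv.continuous (fun t => (huv t).symm) s with h | h <;>
  ext i <;> fin_cases i <;> simp [tangent, h] <;> ring

theorem hasDerivAt_frame₂ (s : ℝ) : HasDerivAt (frame₂ v) (deriv v s • tangent u v s) s := by
  have hdv := (hv.differentiable (by simp) s).hasDerivAt
  refine (hasDerivAt_vec4 hdv.sinh (hasDerivAt_const s 0) hdv.cosh (hasDerivAt_const s 0) :
    HasDerivAt (frame₂ v) _ s).congr_deriv ?_
  rcases eq_zero_or_deriv_eq_zero hu.continuous huv s with h | h <;>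
  ext i <;> fin_cases i <;> simp [tangent, h] <;> ring

theorem admitsC_curve : AdmitsC univ (curve u v) := by
  refine ⟨frame₁ u, frame₂ v, frame₃, deriv u, deriv v, 0, ?_, ?_, fun s _ => ?_⟩
  · rw [deriv_curve hu hv]
    exact orthFrame_tangent huv hu hv
  · exact ⟨(contDiff_infty_iff_deriv.1 hu).2.contDiffOn,
      (contDiff_infty_iff_deriv.1 hv).2.contDiffOn, contDiffOn_const⟩
  have hZ₃ : deriv frame₃ s = 0 := deriv_const s _
  rw [deriv_curve hu hv, hZ₃, (hasDerivAt_tangent huv hu hv s).deriv,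
    (hasDerivAt_frame₁ huv hu hv s).deriv, (hasDerivAt_frame₂ huv hu hv s).deriv]
  simp

theorem apply_zero_eq_zero_of_smul_eq_deriv_tangent (hu' : ∀ s, deriv u s = 0 ↔ 0 ≤ s)
    (hv' : ∀ s, deriv v s = 0 ↔ s ≤ 0) {W : ℝ → Fin 4 → ℝ} {x : ℝ → ℝ} (hW : Continuous W)
    (hx : ∀ s, x s • W s = deriv (tangent u v) s) : W 0 = 0 := by
  have hT' (s : ℝ) : x s • W s = deriv u s • frame₁ u s + deriv v s • frame₂ v s := by
    rw [hx, (hasDerivAt_tangent huv hu hv s).deriv]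
  have hleft (s : ℝ) (hs : s < 0) :
      cosh (u s) * W s 0 - sinh (u s) * W s 1 = 0 ∧ W s 2 = 0 ∧ W s 3 = 0 := by
    have h : x s • W s = deriv u s • frame₁ u s := by simpa [(hv' s).2 hs.le] using hT' s
    obtain ⟨c, hc⟩ := exists_eq_smul_of_smul_eq_smul h (by simpa [hu'] using hs)
      fun h0 => by simpa [frame₁, (cosh_pos _).ne'] using congrFun h0 1
    simp [hc, frame₁]
    ring
  have hright (s : ℝ) (hs : 0 < s) : W s 1 = 0 := by
    have h : x s • W s = deriv v s • frame₂ v s := by simpa [(hu' s).2 hs.le] using hT' s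
    obtain ⟨c, hc⟩ := exists_eq_smul_of_smul_eq_smul h (by simpa [hv'] using hs)
      fun h0 => by simpa [frame₂, (cosh_pos _).ne'] using congrFun h0 2
    simp [hc, frame₂]
  have at_zero_of_left {f : ℝ → ℝ} (hf : Continuous f) (h : ∀ s < 0, f s = 0) : f 0 = 0 :=
    EqOn.closure (s := Iio 0) (g := 0) (fun s hs => h s hs) hf continuous_const
      (by rw [closure_Iio]; exact mem_Iic.2 le_rfl)
  have at_zero_of_right {f : ℝ → ℝ} (hf : Continuous f) (h : ∀ s > 0, f s = 0) : f 0 = 0 :=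
    EqOn.closure (s := Ioi 0) (g := 0) (fun s hs => h s hs) hf continuous_const
      (by rw [closure_Ioi]; exact mem_Ici.2 le_rfl)
  have h₁ : W 0 1 = 0 := at_zero_of_right (by fun_prop) hright
  have h₂ : W 0 2 = 0 := at_zero_of_left (by fun_prop) fun s hs => (hleft s hs).2.1
  have h₃ : W 0 3 = 0 := at_zero_of_left (by fun_prop) fun s hs => (hleft s hs).2.2
  have h₀ : W 0 0 = 0 := by
    simpa [h₁, (cosh_pos _).ne'] using at_zero_of_left (by fun_prop) fun s hs => (hleft s hs).1
  ext i
  fin_cases i <;> assumption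

theorem not_admitsD_curve (hu' : ∀ s, deriv u s = 0 ↔ 0 ≤ s)
    (hv' : ∀ s, deriv v s = 0 ↔ s ≤ 0) : ¬ AdmitsD univ (curve u v) := by
  rintro ⟨W, _, _, x, _, _, ⟨hW, -, -, hframe⟩, -, hD⟩
  have hW0 : W 0 = 0 :=
    apply_zero_eq_zero_of_smul_eq_deriv_tangent huv hu hv hu' hv'
      (continuousOn_univ.1 hW.continuousOn) fun s => by rw [← (hD s trivial).1, deriv_curve hu hv]
  simpa [mink, hW0] using (hframe 0 trivial).1

end Frame

theorem deriv_expNegInvGlue (x : ℝ) : deriv expNegInvGlue x = x⁻¹ ^ 2 * expNegInvGlue x := by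
  simpa using (expNegInvGlue.hasDerivAt_polynomial_eval_inv_mul 1 x).deriv

theorem deriv_expNegInvGlue_eq_zero_iff {x : ℝ} : deriv expNegInvGlue x = 0 ↔ x ≤ 0 := by
  simpa [deriv_expNegInvGlue] using le_of_eq

end BishopCNotD

open BishopCNotD

/-- there is a time-like curve parametrized by proper time that admits a
generalized Bishop frame of type C but not one of type D. -/
theorem stmt_3 :
    ∃ (I : Set ℝ) (γ : ℝ → Fin 4 → ℝ), IsOpen I ∧ I.OrdConnected ∧ I.Nonempty ∧
      ProperTime I γ ∧ AdmitsC I γ ∧ ¬ AdmitsD I γ := by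
  set u : ℝ → ℝ := fun s => expNegInvGlue (-s)
  have hu : ContDiff ℝ (⊤ : ℕ∞) u := expNegInvGlue.contDiff.comp contDiff_neg
  have hv : ContDiff ℝ (⊤ : ℕ∞) expNegInvGlue := expNegInvGlue.contDiff
  have huv (s : ℝ) : u s = 0 ∨ expNegInvGlue s = 0 := by simpa [u] using le_total 0 s
  have hu' (s : ℝ) : deriv u s = 0 ↔ 0 ≤ s := by
    simp [u, deriv_comp_neg, deriv_expNegInvGlue_eq_zero_iff]
  exact ⟨univ, curve u expNegInvGlue, isOpen_univ, ordConnected_univ, univ_nonempty,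
    properTime_curve huv hu hv, admitsC_curve huv hu hv,
    not_admitsD_curve huv hu hv hu' fun _ => deriv_expNegInvGlue_eq_zero_iff⟩
end
end

section
/- There exist an open interval I ⊆ ℝ and a time-like curve γ : I → 𝕃⁴ parametrized by proper time that does not admit a generalized Bishop frame of type C. -/
/-!
The spatial velocity of the curve is `∫₀ˢ e^{-1/t} (cos (1/t), -sin (1/t), 1) dt`, smooth because
the integrand is flat at `0`, and the tangent at `0` is `e₀`. In a frame of type C the continuous
unit field `Z₃` is orthogonal both to `T` and to `T' = x₁Z₁ + x₂Z₂`. Along `s = 1/(c + 2πn) → 0`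
the acceleration, divided by `e^{-1/s}`, tends to `(0, cos c, -sin c, 1)`, so `Z₃(0)` is orthogonal
to `e₀` and to these limits for `c = 0, π/2, π`. These four vectors span `𝕃⁴`, hence `Z₃(0) = 0`,
contradicting `⟨Z₃, Z₃⟩ = 1`.
-/

open Set Real

noncomputable section

open Filter Polynomial
open scoped Topology Complex

def cexpNegDivGlue (a : ℂ) (x : ℝ) : ℂ :=
  if x ≤ 0 then 0 else cexp (-a / x)

namespace cexpNegDivGlue

variable {a : ℂ}

theorem zero_of_nonpos {x : ℝ} (hx : x ≤ 0) : cexpNegDivGlue a x = 0 := by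
  simp [cexpNegDivGlue, hx]

theorem of_pos {x : ℝ} (hx : 0 < x) : cexpNegDivGlue a x = cexp (-a / x) := by
  simp [cexpNegDivGlue, hx.not_ge]

theorem norm_eq (ha : 0 < a.re) (x : ℝ) :
    ‖cexpNegDivGlue a x‖ = expNegInvGlue (x / a.re) := by
  rcases le_or_gt x 0 with hx | hx
  · rw [zero_of_nonpos hx, expNegInvGlue.zero_of_nonpos (div_nonpos_of_nonpos_of_nonneg hx ha.le),
      norm_zero]
  · rw [of_pos hx, Complex.norm_exp, expNegInvGlue, if_neg (div_pos hx ha).not_ge, inv_div]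
    simp [neg_div]

theorem tendsto_polynomial_inv_mul_zero (ha : 0 < a.re) (p : ℂ[X]) :
    Tendsto (fun x : ℝ ↦ p.eval (x : ℂ)⁻¹ * cexpNegDivGlue a x) (𝓝 0) (𝓝 0) := by
  induction p using Polynomial.induction_on' with
  | add p q hp hq => simpa [add_mul] using hp.add hq
  | monomial n c =>
    rw [tendsto_zero_iff_norm_tendsto_zero]
    have hreal := ((expNegInvGlue.tendsto_polynomial_inv_mul_zero (X ^ n)).comp
      ((continuous_id.div_const a.re).tendsto' 0 0 (zero_div _))).const_mul
      (‖c‖ * a.re⁻¹ ^ n)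
    rw [mul_zero] at hreal
    refine hreal.congr fun x ↦ ?_
    rcases le_or_gt x 0 with hx | hx
    · simp [zero_of_nonpos hx,
        expNegInvGlue.zero_of_nonpos (div_nonpos_of_nonpos_of_nonneg hx ha.le)]
    · simp only [Function.comp_apply, eval_pow, eval_X, eval_monomial, norm_mul, norm_pow,
        norm_inv, Complex.norm_real, norm_eq ha, Real.norm_eq_abs, abs_of_pos hx, inv_div, id]
      rw [show x⁻¹ = a.re⁻¹ * (a.re / x) by field_simp, mul_pow]
      ring

theorem hasDerivAt_polynomial_eval_inv_mul (ha : 0 < a.re) (p : ℂ[X]) (x : ℝ) :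
    HasDerivAt (fun x : ℝ ↦ p.eval (x : ℂ)⁻¹ * cexpNegDivGlue a x)
      ((X ^ 2 * (C a * p - derivative p)).eval (x : ℂ)⁻¹ * cexpNegDivGlue a x) x := by
  rcases lt_trichotomy x 0 with hx | rfl | hx
  · rw [zero_of_nonpos hx.le, mul_zero]
    refine (hasDerivAt_const _ 0).congr_of_eventuallyEq ?_
    filter_upwards [gt_mem_nhds hx] with y hy
    rw [zero_of_nonpos hy.le, mul_zero]
  · rw [zero_of_nonpos le_rfl, mul_zero, hasDerivAt_iff_tendsto_slope]
    refine ((tendsto_polynomial_inv_mul_zero ha (p * X)).mono_left inf_le_left).congr fun y ↦ ?_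
    simp only [eval_mul, eval_X, slope_def_module, sub_zero, Complex.ofReal_zero, inv_zero,
      zero_of_nonpos le_rfl, mul_zero, Complex.real_smul, Complex.ofReal_inv]
    ring
  · have hz : (x : ℂ) ≠ 0 := Complex.ofReal_ne_zero.2 hx.ne'
    have := ((p.hasDerivAt (x : ℂ)⁻¹).comp (x : ℂ) (hasDerivAt_inv hz)).mul
      (((hasDerivAt_inv hz).const_mul (-a)).cexp)
    convert! this.comp_ofReal.congr_of_eventuallyEq _ using 1
    · simp only [eval_mul, eval_pow, eval_X, inv_pow, eval_sub, eval_C, of_pos hx,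
        div_eq_mul_inv, neg_mul, mul_neg, Function.comp_apply, neg_neg]
      ring
    · filter_upwards [lt_mem_nhds hx] with y hy
      simp [of_pos hy, div_eq_mul_inv]

theorem contDiff_polynomial_eval_inv_mul (ha : 0 < a.re) {n : ℕ∞} (p : ℂ[X]) :
    ContDiff ℝ n (fun x : ℝ ↦ p.eval (x : ℂ)⁻¹ * cexpNegDivGlue a x) := by
  apply contDiff_all_iff_nat.2 (fun m ↦ ?_) n
  induction m generalizing p with
  | zero => exact contDiff_zero.2 <| continuous_iff_continuousAt.2 fun x ↦
      (hasDerivAt_polynomial_eval_inv_mul ha p x).continuousAt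
  | succ m ihm =>
    rw [show ((m + 1 : ℕ) : WithTop ℕ∞) = m + 1 from rfl]
    refine contDiff_succ_iff_deriv.2 ⟨fun x ↦
      (hasDerivAt_polynomial_eval_inv_mul ha p x).differentiableAt, by simp, ?_⟩
    convert! ihm (X ^ 2 * (C a * p - derivative p)) using 2
    exact (hasDerivAt_polynomial_eval_inv_mul ha p _).deriv

protected theorem contDiff (ha : 0 < a.re) {n : ℕ∞} : ContDiff ℝ n (cexpNegDivGlue a) := by
  simpa using contDiff_polynomial_eval_inv_mul ha (n := n) 1

end cexpNegDivGlue

theorem continuous_mink : Continuous fun p : (Fin 4 → ℝ) × (Fin 4 → ℝ) ↦ mink p.1 p.2 := by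
  unfold mink; fun_prop

theorem mink_add_left (x y z : Fin 4 → ℝ) : mink (x + y) z = mink x z + mink y z := by
  simp only [mink, Pi.add_apply]; ring

theorem mink_smul_left (c : ℝ) (x y : Fin 4 → ℝ) : mink (c • x) y = c * mink x y := by
  simp only [mink, Pi.smul_apply, smul_eq_mul]; ring

def futureUnit (v : Fin 3 → ℝ) : Fin 4 → ℝ :=
  ![√(1 + (v 0 ^ 2 + v 1 ^ 2 + v 2 ^ 2)), v 0, v 1, v 2]

def futureUnitDeriv (v v' : Fin 3 → ℝ) : Fin 4 → ℝ :=
  ![(v 0 * v' 0 + v 1 * v' 1 + v 2 * v' 2) / √(1 + (v 0 ^ 2 + v 1 ^ 2 + v 2 ^ 2)),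
    v' 0, v' 1, v' 2]

theorem mink_futureUnit_self (v : Fin 3 → ℝ) : mink (futureUnit v) (futureUnit v) = -1 := by
  have := Real.mul_self_sqrt (by positivity : 0 ≤ 1 + (v 0 ^ 2 + v 1 ^ 2 + v 2 ^ 2))
  simp only [mink, futureUnit, Matrix.cons_val]
  linear_combination -this

theorem contDiff_futureUnit {n : ℕ∞} : ContDiff ℝ n futureUnit := by
  refine contDiff_pi.2 fun i ↦ ?_
  fin_cases i <;> simp only [futureUnit, Fin.zero_eta, Fin.mk_one, Fin.reduceFinMk, Matrix.cons_val]
  · exact ContDiff.sqrt (by fun_prop) fun v ↦ by positivity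
  all_goals fun_prop

theorem HasDerivAt.futureUnit {b : ℝ → Fin 3 → ℝ} {b' : Fin 3 → ℝ} {s : ℝ}
    (hb : HasDerivAt b b' s) :
    HasDerivAt (fun t ↦ futureUnit (b t)) (futureUnitDeriv (b s) b') s := by
  have hbi := hasDerivAt_pi.1 hb
  refine hasDerivAt_pi.2 fun i ↦ ?_
  fin_cases i <;> simp only [_root_.futureUnit, futureUnitDeriv, Fin.zero_eta, Fin.mk_one,
    Fin.reduceFinMk, Matrix.cons_val]
  · have hq : HasDerivAt (fun t ↦ 1 + (b t 0 ^ 2 + b t 1 ^ 2 + b t 2 ^ 2))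
        (2 * (b s 0 * b' 0 + b s 1 * b' 1 + b s 2 * b' 2)) s := by
      refine (((((hbi 0).fun_pow 2).fun_add ((hbi 1).fun_pow 2)).fun_add
        ((hbi 2).fun_pow 2)).const_add 1).congr_deriv ?_
      norm_num
      ring
    refine (hq.sqrt (by positivity)).congr_deriv ?_
    ring
  all_goals exact hbi _

theorem abs_futureUnitDeriv_zero_le {v v' : Fin 3 → ℝ} {e : ℝ} (hv' : ∀ i, |v' i| ≤ e) :
    |futureUnitDeriv v v' 0| ≤ (|v 0| + |v 1| + |v 2|) * e := by
  have hsqrt : 1 ≤ √(1 + (v 0 ^ 2 + v 1 ^ 2 + v 2 ^ 2)) :=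
    Real.one_le_sqrt.2 (le_add_of_nonneg_right (by positivity))
  have hterm : ∀ i, |v i * v' i| ≤ |v i| * e := fun i ↦
    (abs_mul _ _).trans_le (mul_le_mul_of_nonneg_left (hv' i) (abs_nonneg _))
  simp only [futureUnitDeriv, Matrix.cons_val_zero]
  rw [abs_div, abs_of_nonneg (Real.sqrt_nonneg _)]
  calc _ ≤ |v 0 * v' 0 + v 1 * v' 1 + v 2 * v' 2| := div_le_self (abs_nonneg _) hsqrt
    _ ≤ |v 0 * v' 0| + |v 1 * v' 1| + |v 2 * v' 2| := abs_add_three _ _ _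
    _ ≤ (|v 0| + |v 1| + |v 2|) * e := by linarith [hterm 0, hterm 1, hterm 2]

theorem AdmitsC.exists_unit_orthogonal {I : Set ℝ} {γ : ℝ → Fin 4 → ℝ} (h : AdmitsC I γ) :
    ∃ Z : ℝ → Fin 4 → ℝ, ContinuousOn Z I ∧ ∀ s ∈ I, mink (Z s) (Z s) = 1 ∧
      mink (deriv γ s) (Z s) = 0 ∧ mink (deriv (deriv γ) s) (Z s) = 0 := by
  obtain ⟨_, _, Z₃, _, _, _, ⟨-, -, hZ₃, horth⟩, -, heq⟩ := h
  refine ⟨Z₃, hZ₃.continuousOn, fun s hs ↦ ?_⟩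
  obtain ⟨-, -, h₃₃, -, h₁₃, h₂₃, -, -, hT₃⟩ := horth s hs
  refine ⟨h₃₃, hT₃, ?_⟩
  rw [(heq s hs).1, mink_add_left, mink_smul_left, mink_smul_left, h₁₃, h₂₃]
  ring

theorem mink_eq_zero_of_tendsto_smul {α : Type*} {l : Filter α} [l.NeBot] {Z A : ℝ → Fin 4 → ℝ}
    {x : ℝ} (hZ : ContinuousAt Z x) (hA : ∀ s, mink (A s) (Z s) = 0) {s w : α → ℝ}
    {u : Fin 4 → ℝ} (hs : Tendsto s l (𝓝 x)) (hu : Tendsto (fun n ↦ w n • A (s n)) l (𝓝 u)) :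
    mink u (Z x) = 0 := by
  have h := (continuous_mink.tendsto (u, Z x)).comp (hu.prodMk_nhds (hZ.tendsto.comp hs))
  refine tendsto_nhds_unique h (tendsto_const_nhds.congr fun n ↦ ?_)
  simp [mink_smul_left, hA]

theorem contDiff_integral_zero {E : Type*} [NormedAddCommGroup E] [NormedSpace ℝ E]
    [CompleteSpace E] {f : ℝ → E} (hf : ContDiff ℝ (⊤ : ℕ∞) f) :
    ContDiff ℝ (⊤ : ℕ∞) fun s ↦ ∫ t in (0 : ℝ)..s, f t := by
  rw [contDiff_infty_iff_deriv]
  refine ⟨fun s ↦ (hf.continuous.integral_hasStrictDerivAt 0 s).hasDerivAt.differentiableAt, ?_⟩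
  rwa [funext (hf.continuous.deriv_integral f 0)]

theorem properTime_integral_zero {T : ℝ → Fin 4 → ℝ} (hT : ContDiff ℝ (⊤ : ℕ∞) T)
    (hunit : ∀ s, mink (T s) (T s) = -1) :
    ProperTime univ fun s ↦ ∫ t in (0 : ℝ)..s, T t := by
  refine ⟨(contDiff_integral_zero hT).contDiffOn, fun s _ ↦ ?_⟩
  rw [hT.continuous.deriv_integral T 0]
  exact hunit s

/-- For `s > 0` this is `e^{-1/s} (cos (1/s), -sin (1/s), 1)`; it vanishes for `s ≤ 0`. -/
def spiralAccel (s : ℝ) : Fin 3 → ℝ :=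
  ![(cexpNegDivGlue (1 + Complex.I) s).re, (cexpNegDivGlue (1 + Complex.I) s).im,
    expNegInvGlue s]

def spiralVel (s : ℝ) : Fin 3 → ℝ := ∫ t in (0 : ℝ)..s, spiralAccel t

def spiralTangent (s : ℝ) : Fin 4 → ℝ := futureUnit (spiralVel s)

def spiral (s : ℝ) : Fin 4 → ℝ := ∫ t in (0 : ℝ)..s, spiralTangent t

theorem contDiff_spiralAccel : ContDiff ℝ (⊤ : ℕ∞) spiralAccel := by
  have hglue : ContDiff ℝ (⊤ : ℕ∞) (cexpNegDivGlue (1 + Complex.I)) :=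
    cexpNegDivGlue.contDiff (by simp)
  refine contDiff_pi.2 fun i ↦ ?_
  fin_cases i
  · exact Complex.reCLM.contDiff.comp hglue
  · exact Complex.imCLM.contDiff.comp hglue
  · exact expNegInvGlue.contDiff

theorem abs_spiralAccel_le (s : ℝ) (i : Fin 3) : |spiralAccel s i| ≤ expNegInvGlue s := by
  have hnorm : ‖cexpNegDivGlue (1 + Complex.I) s‖ = expNegInvGlue s := by
    simpa using cexpNegDivGlue.norm_eq (a := 1 + Complex.I) (by simp) s
  fin_cases i
  · exact hnorm ▸ Complex.abs_re_le_norm _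
  · exact hnorm ▸ Complex.abs_im_le_norm _
  · exact (abs_of_nonneg (expNegInvGlue.nonneg s)).le

theorem spiralAccel_inv {θ : ℝ} (hθ : 0 < θ) :
    spiralAccel θ⁻¹ = expNegInvGlue θ⁻¹ • ![cos θ, -sin θ, 1] := by
  have hs : 0 < θ⁻¹ := inv_pos.2 hθ
  have hglue : cexpNegDivGlue (1 + Complex.I) θ⁻¹ = cexp (-θ + -θ * Complex.I) := by
    rw [cexpNegDivGlue.of_pos hs, Complex.ofReal_inv, div_inv_eq_mul]
    ring_nf
  ext i
  fin_cases i <;> simp [spiralAccel, hglue, expNegInvGlue, hs.not_ge, Complex.exp_re,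
    Complex.exp_im]

theorem hasDerivAt_spiralVel (s : ℝ) : HasDerivAt spiralVel (spiralAccel s) s :=
  (contDiff_spiralAccel.continuous.integral_hasStrictDerivAt 0 s).hasDerivAt

theorem spiralVel_zero : spiralVel 0 = 0 := intervalIntegral.integral_same

theorem contDiff_spiralTangent : ContDiff ℝ (⊤ : ℕ∞) spiralTangent :=
  contDiff_futureUnit.comp (contDiff_integral_zero contDiff_spiralAccel)

theorem deriv_spiral : deriv spiral = spiralTangent :=
  funext (contDiff_spiralTangent.continuous.deriv_integral spiralTangent 0)

theorem properTime_spiral : ProperTime univ spiral :=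
  properTime_integral_zero contDiff_spiralTangent fun _ ↦ mink_futureUnit_self _

theorem spiralTangent_zero : spiralTangent 0 = ![1, 0, 0, 0] := by
  simp [spiralTangent, futureUnit, spiralVel_zero]

theorem deriv_spiralTangent (s : ℝ) :
    deriv spiralTangent s = futureUnitDeriv (spiralVel s) (spiralAccel s) :=
  (hasDerivAt_spiralVel s).futureUnit.deriv

theorem exists_tendsto_smul_deriv_spiralTangent {c : ℝ} (hc : 0 ≤ c) :
    ∃ s w : ℕ → ℝ, Tendsto s atTop (𝓝 0) ∧
      Tendsto (fun n ↦ w n • deriv spiralTangent (s n)) atTop (𝓝 ![0, cos c, -sin c, 1]) := by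
  set θ : ℕ → ℝ := fun n ↦ c + ((n + 1 : ℕ) : ℝ) * (2 * π)
  have hθ : ∀ n, 0 < θ n := fun n ↦ add_pos_of_nonneg_of_pos hc (by positivity)
  have hθ_top : Tendsto θ atTop atTop :=
    tendsto_atTop_add_const_left _ _ <| ((tendsto_natCast_atTop_atTop.comp
      (tendsto_add_atTop_nat 1)).atTop_mul_const Real.two_pi_pos)
  have hs : Tendsto (fun n ↦ (θ n)⁻¹) atTop (𝓝 0) := tendsto_inv_atTop_zero.comp hθ_top
  refine ⟨fun n ↦ (θ n)⁻¹, fun n ↦ (expNegInvGlue (θ n)⁻¹)⁻¹, hs, ?_⟩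
  set q : ℕ → ℝ := fun n ↦ (expNegInvGlue (θ n)⁻¹)⁻¹ *
    futureUnitDeriv (spiralVel (θ n)⁻¹) (spiralAccel (θ n)⁻¹) 0
  have hvec : ∀ n, (expNegInvGlue (θ n)⁻¹)⁻¹ • deriv spiralTangent (θ n)⁻¹ =
      ![q n, cos c, -sin c, 1] := fun n ↦ by
    have hE := (expNegInvGlue.pos_of_pos (inv_pos.2 (hθ n))).ne'
    have hcos : cos (θ n) = cos c := Real.cos_add_nat_mul_two_pi c (n + 1)
    have hsin : sin (θ n) = sin c := Real.sin_add_nat_mul_two_pi c (n + 1)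
    ext i
    fin_cases i <;> simp [q, deriv_spiralTangent, futureUnitDeriv, spiralAccel_inv (hθ n), hE,
      hcos, hsin]
  -- the time component is `O(|spiralVel|)` relative to the spatial ones, and `spiralVel 0 = 0`
  have hq : Tendsto q atTop (𝓝 0) := by
    have hbound : Tendsto (fun n ↦ ∑ i, |spiralVel (θ n)⁻¹ i|) atTop (𝓝 0) := by
      have hcont : Continuous fun s ↦ ∑ i, |spiralVel s i| :=
        continuous_finsetSum _ fun i _ ↦
          ((continuous_apply i).comp (contDiff_integral_zero contDiff_spiralAccel).continuous).abs
      exact (hcont.tendsto' 0 0 (by simp [spiralVel_zero])).comp hs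
    refine squeeze_zero_norm (fun n ↦ ?_) hbound
    have hE := expNegInvGlue.pos_of_pos (inv_pos.2 (hθ n))
    rw [Real.norm_eq_abs, abs_mul, abs_inv, abs_of_pos hE, inv_mul_le_iff₀ hE, mul_comm,
      Fin.sum_univ_three]
    exact abs_futureUnitDeriv_zero_le fun i ↦ abs_spiralAccel_le _ i
  simpa only [hvec] using hq.matrixVecCons tendsto_const_nhds

theorem not_admitsC_spiral : ¬ AdmitsC univ spiral := by
  intro h
  obtain ⟨Z, hZ, hZs⟩ := h.exists_unit_orthogonal
  have hperp : ∀ c, 0 ≤ c → mink ![0, cos c, -sin c, 1] (Z 0) = 0 := fun c hc ↦ by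
    obtain ⟨s, w, hs, hw⟩ := exists_tendsto_smul_deriv_spiralTangent hc
    refine mink_eq_zero_of_tendsto_smul (hZ.continuousAt univ_mem) (fun t ↦ ?_) hs hw
    simpa [deriv_spiral] using (hZs t trivial).2.2
  obtain ⟨hunit, htime, -⟩ := hZs 0 trivial
  rw [deriv_spiral, spiralTangent_zero] at htime
  have h₁ := hperp 0 le_rfl
  have h₂ := hperp (π / 2) (by positivity)
  have h₃ := hperp π Real.pi_pos.le
  simp only [mink, Fin.isValue, Nat.succ_eq_add_one, Nat.reduceAdd, Matrix.cons_val_zero,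
    one_mul, Matrix.cons_val_one, zero_mul, add_zero, Matrix.cons_val, neg_eq_zero, cos_zero,
    sin_zero, neg_zero, zero_add, cos_pi_div_two, sin_pi_div_two, neg_mul, cos_pi, sin_pi]
    at hunit htime h₁ h₂ h₃
  nlinarith

/-- there is a time-like curve parametrized by proper time that does not
admit a generalized Bishop frame of type C. -/
theorem stmt_4 :
    ∃ (I : Set ℝ) (γ : ℝ → Fin 4 → ℝ), IsOpen I ∧ I.OrdConnected ∧ I.Nonempty ∧
      ProperTime I γ ∧ ¬ AdmitsC I γ :=
  ⟨univ, spiral, isOpen_univ, ordConnected_univ, univ_nonempty, properTime_spiral,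
    not_admitsC_spiral⟩
end
end

section
/- There exist an open interval I ⊆ ℝ and a 2-regular time-like curve γ : I → 𝕃⁴ parametrized by proper time that does not admit a generalized Bishop frame of type F. -/
open Set Real

noncomputable section

/-! With `φ = expNegInvGlue`, flat at `0`, the tangent
`T(s) = (√(1 + s² + φ(s)² + φ(-s)²), s, φ(s), φ(-s))` stays in the hyperplane `x₃ = 0` for `s > 0`
and in `x₂ = 0` for `s < 0`. In a frame of type F, `T' = x₁Z₁` forces `Z₁ = T'/x₁`, so
`x₂Z₂ = Z₁' - x₁T` is a combination of `T, T', T''`. Near `0` this combination does not vanish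
(because `φ'' > 0` and `sφ'(s) > φ(s)` there), so on each side `Z₂` lies in the corresponding
hyperplane. By continuity the coordinates 2 and 3 of `Z₂(0)` vanish, and orthogonality to
`T(0) = e₀` and to `Z₁(0)`, whose coordinate 1 is nonzero, then gives `Z₂(0) = 0`, contradicting
`⟨Z₂, Z₂⟩ = 1`. -/

open Filter Topology

theorem DifferentiableAt.deriv_apply {ι : Type*} [Fintype ι] {F : ℝ → ι → ℝ} {s : ℝ}
    (hF : DifferentiableAt ℝ F s) (i : ι) : deriv F s i = deriv (fun t => F t i) s :=
  (hasDerivAt_pi.mp hF.hasDerivAt i).deriv.symm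

theorem exists_smul_eq_of_deriv_inv_smul_deriv {E : Type*} [NormedAddCommGroup E]
    [NormedSpace ℝ E] {T Z : ℝ → E} {x₁ x₂ : ℝ → ℝ} {s : ℝ}
    (hT : DifferentiableAt ℝ (deriv T) s) (hx₁ : DifferentiableAt ℝ x₁ s) (hx₁s : x₁ s ≠ 0)
    (hZ₁ : deriv (fun t => (x₁ t)⁻¹ • deriv T t) s = x₁ s • T s + x₂ s • Z s) :
    ∃ c : ℝ, x₂ s • Z s = (x₁ s)⁻¹ • deriv (deriv T) s + c • deriv T s - x₁ s • T s := by
  have hZ₁' : HasDerivAt (fun t => (x₁ t)⁻¹ • deriv T t) _ s :=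
    (hx₁.hasDerivAt.inv hx₁s).smul hT.hasDerivAt
  refine ⟨-deriv x₁ s / x₁ s ^ 2, ?_⟩
  rw [hZ₁'.deriv, Pi.inv_apply] at hZ₁
  rw [hZ₁]
  abel

theorem inv_smul_add_smul_sub_smul_ne_zero {ι : Type*} {A B C : ι → ℝ} {x c s : ℝ} {i j : ι}
    (hx : x ≠ 0) (hCi : C i = s) (hBi : B i = 1) (hAi : A i = 0)
    (hAj : 0 < A j) (hCj : C j < s * B j) :
    x⁻¹ • A + c • B - x • C ≠ 0 := by
  intro h
  have hi := congrFun h i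
  have hj := congrFun h j
  simp only [Pi.sub_apply, Pi.add_apply, Pi.smul_apply, smul_eq_mul, Pi.zero_apply,
    hCi, hBi, hAi] at hi hj
  have : A j + x ^ 2 * (s * B j - C j) = 0 := by
    linear_combination x * hj - x * B j * hi - A j * mul_inv_cancel₀ hx
  have hx2 : 0 < x ^ 2 := by positivity
  nlinarith [mul_pos hx2 (sub_pos.2 hCj)]

theorem apply_eq_zero_of_deriv_inv_smul_deriv {ι : Type*} [Fintype ι] {T Z : ℝ → ι → ℝ}
    {x₁ x₂ : ℝ → ℝ} {s : ℝ} {i j k : ι}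
    (hT : DifferentiableAt ℝ (deriv T) s) (hx₁ : DifferentiableAt ℝ x₁ s) (hx₁s : x₁ s ≠ 0)
    (hZ₁ : deriv (fun t => (x₁ t)⁻¹ • deriv T t) s = x₁ s • T s + x₂ s • Z s)
    (hi : T s i = s ∧ deriv T s i = 1 ∧ deriv (deriv T) s i = 0)
    (hj : 0 < deriv (deriv T) s j ∧ T s j < s * deriv T s j)
    (hk : T s k = 0 ∧ deriv T s k = 0 ∧ deriv (deriv T) s k = 0) :
    Z s k = 0 := by
  obtain ⟨c, hc⟩ := exists_smul_eq_of_deriv_inv_smul_deriv hT hx₁ hx₁s hZ₁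
  have hx₂ : x₂ s ≠ 0 := fun h0 =>
    inv_smul_add_smul_sub_smul_ne_zero hx₁s hi.1 hi.2.1 hi.2.2 hj.1 hj.2
      (by rw [← hc, h0, zero_smul])
  have hck := congrFun hc k
  simp only [Pi.sub_apply, Pi.add_apply, Pi.smul_apply, smul_eq_mul, hk.1, hk.2.1, hk.2.2,
    mul_zero, add_zero, sub_zero] at hck
  exact (mul_eq_zero.mp hck).resolve_left hx₂

namespace expNegInvGlue

theorem eventuallyEq_zero_of_neg {t : ℝ} (ht : t < 0) : expNegInvGlue =ᶠ[𝓝 t] 0 := by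
  filter_upwards [Iio_mem_nhds ht] with u hu using zero_of_nonpos (le_of_lt hu)

theorem deriv_of_neg {t : ℝ} (ht : t < 0) : deriv expNegInvGlue t = 0 := by
  simp [(eventuallyEq_zero_of_neg ht).deriv_eq]

theorem deriv_deriv_of_neg {t : ℝ} (ht : t < 0) : deriv (deriv expNegInvGlue) t = 0 := by
  simp [(eventuallyEq_zero_of_neg ht).deriv.deriv_eq]

theorem hasDerivAt_exp_neg_inv {t : ℝ} (ht : t ≠ 0) :
    HasDerivAt (fun u => exp (-u⁻¹)) (exp (-t⁻¹) / t ^ 2) t := by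
  have h : HasDerivAt (fun u : ℝ => -u⁻¹) (t ^ 2)⁻¹ t :=
    (hasDerivAt_inv ht).neg.congr_deriv (neg_neg _)
  simpa [div_eq_mul_inv] using h.exp

theorem deriv_of_pos {t : ℝ} (ht : 0 < t) : deriv expNegInvGlue t = exp (-t⁻¹) / t ^ 2 := by
  have he : expNegInvGlue =ᶠ[𝓝 t] fun u => exp (-u⁻¹) := by
    filter_upwards [Ioi_mem_nhds ht] with u (hu : 0 < u)
    simp [expNegInvGlue, not_le.2 hu]
  rw [he.deriv_eq, (hasDerivAt_exp_neg_inv ht.ne').deriv]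

theorem deriv_deriv_of_pos {t : ℝ} (ht : 0 < t) :
    deriv (deriv expNegInvGlue) t = exp (-t⁻¹) * (1 - 2 * t) / t ^ 4 := by
  have he : deriv expNegInvGlue =ᶠ[𝓝 t] fun u => exp (-u⁻¹) / u ^ 2 := by
    filter_upwards [Ioi_mem_nhds ht] with u hu using deriv_of_pos hu
  have hd : HasDerivAt (fun u => exp (-u⁻¹) / u ^ 2) _ t :=
    (hasDerivAt_exp_neg_inv ht.ne').div (hasDerivAt_pow 2 t) (pow_ne_zero 2 ht.ne')
  rw [he.deriv_eq, hd.deriv]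
  field_simp
  ring

theorem lt_mul_deriv {t : ℝ} (h0 : 0 < t) (h1 : t < 1) :
    expNegInvGlue t < t * deriv expNegInvGlue t := by
  have hE := exp_pos (-t⁻¹)
  rw [deriv_of_pos h0, expNegInvGlue, if_neg (not_le.2 h0)]
  field_simp
  nlinarith

theorem deriv_deriv_pos {t : ℝ} (h0 : 0 < t) (h1 : t < 1 / 2) :
    0 < deriv (deriv expNegInvGlue) t := by
  rw [deriv_deriv_of_pos h0]
  have : 0 < 1 - 2 * t := by linarith
  positivity

end expNegInvGlue

namespace TypeFCounterexample

def tangent (s : ℝ) : Fin 4 → ℝ :=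
  ![√(1 + s ^ 2 + expNegInvGlue s ^ 2 + expNegInvGlue (-s) ^ 2), s, expNegInvGlue s,
    expNegInvGlue (-s)]

def curve (s : ℝ) : Fin 4 → ℝ := fun i => ∫ t in (0 : ℝ)..s, tangent t i

theorem contDiff_tangent : ContDiff ℝ (⊤ : ℕ∞) tangent := by
  have hφ : ContDiff ℝ (⊤ : ℕ∞) expNegInvGlue := expNegInvGlue.contDiff
  have hφ' : ContDiff ℝ (⊤ : ℕ∞) fun s => expNegInvGlue (-s) := hφ.comp contDiff_neg
  refine contDiff_pi.mpr fun i => ?_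
  fin_cases i
  · exact ContDiff.sqrt (by fun_prop) fun s => by positivity
  · exact contDiff_id
  · exact hφ
  · exact hφ'

theorem differentiable_deriv_tangent : Differentiable ℝ (deriv tangent) :=
  ((contDiff_infty_iff_deriv.mp contDiff_tangent).2).differentiable (by simp)

theorem hasDerivAt_curve (s : ℝ) : HasDerivAt curve (tangent s) s :=
  hasDerivAt_pi.mpr fun i =>
    (((continuous_apply i).comp contDiff_tangent.continuous).integral_hasStrictDerivAt
      0 s).hasDerivAt

theorem deriv_curve : deriv curve = tangent := funext fun s => (hasDerivAt_curve s).deriv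

theorem contDiff_curve : ContDiff ℝ (⊤ : ℕ∞) curve :=
  contDiff_infty_iff_deriv.mpr
    ⟨fun s => (hasDerivAt_curve s).differentiableAt, deriv_curve ▸ contDiff_tangent⟩

theorem mink_tangent_self (s : ℝ) : mink (tangent s) (tangent s) = -1 := by
  have := Real.mul_self_sqrt
    (by positivity : 0 ≤ 1 + s ^ 2 + expNegInvGlue s ^ 2 + expNegInvGlue (-s) ^ 2)
  simp only [mink, tangent, Matrix.cons_val_zero, Matrix.cons_val_one, Matrix.cons_val_two,
    Matrix.cons_val_three, Matrix.head_cons, Matrix.tail_cons]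
  linarith

theorem tangent_zero : tangent 0 = ![1, 0, 0, 0] := by
  simp [tangent, expNegInvGlue.zero]

theorem deriv_tangent_apply (s : ℝ) (i : Fin 4) :
    deriv tangent s i = deriv (fun t => tangent t i) s :=
  (contDiff_tangent.differentiable (by simp) s).deriv_apply i

theorem deriv_deriv_tangent_apply (s : ℝ) (i : Fin 4) :
    deriv (deriv tangent) s i = deriv (deriv fun t => tangent t i) s := by
  rw [(differentiable_deriv_tangent s).deriv_apply i]
  simp_rw [deriv_tangent_apply]

theorem tangent_coords_one (s : ℝ) :
    tangent s 1 = s ∧ deriv tangent s 1 = 1 ∧ deriv (deriv tangent) s 1 = 0 := by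
  simp [deriv_tangent_apply, deriv_deriv_tangent_apply, tangent]

theorem deriv_tangent_apply_two (s : ℝ) :
    deriv tangent s 2 = deriv expNegInvGlue s ∧
      deriv (deriv tangent) s 2 = deriv (deriv expNegInvGlue) s := by
  have h : (fun t => tangent t 2) = expNegInvGlue := rfl
  rw [deriv_tangent_apply, deriv_deriv_tangent_apply, h]
  exact ⟨rfl, rfl⟩

theorem deriv_tangent_apply_three (s : ℝ) :
    deriv tangent s 3 = -deriv expNegInvGlue (-s) ∧
      deriv (deriv tangent) s 3 = deriv (deriv expNegInvGlue) (-s) := by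
  have h : (fun t => tangent t 3) = fun t => expNegInvGlue (-t) := rfl
  have h' : deriv (fun t => expNegInvGlue (-t)) = fun t => -deriv expNegInvGlue (-t) :=
    funext fun t => deriv_comp_neg expNegInvGlue t
  rw [deriv_tangent_apply, deriv_deriv_tangent_apply, h, h']
  simp [deriv_comp_neg]

theorem tangent_coords_of_pos {s : ℝ} (h0 : 0 < s) (h1 : s < 1 / 2) :
    (0 < deriv (deriv tangent) s 2 ∧ tangent s 2 < s * deriv tangent s 2) ∧
      (tangent s 3 = 0 ∧ deriv tangent s 3 = 0 ∧ deriv (deriv tangent) s 3 = 0) := by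
  have hs : -s < 0 := neg_neg_of_pos h0
  obtain ⟨d2, dd2⟩ := deriv_tangent_apply_two s
  obtain ⟨d3, dd3⟩ := deriv_tangent_apply_three s
  refine ⟨⟨?_, ?_⟩, ?_, ?_, ?_⟩
  · exact dd2 ▸ expNegInvGlue.deriv_deriv_pos h0 h1
  · exact d2 ▸ expNegInvGlue.lt_mul_deriv h0 (by linarith)
  · exact expNegInvGlue.zero_of_nonpos hs.le
  · rw [d3, expNegInvGlue.deriv_of_neg hs, neg_zero]
  · rw [dd3, expNegInvGlue.deriv_deriv_of_neg hs]

theorem tangent_coords_of_neg {s : ℝ} (h0 : -(1 / 2) < s) (h1 : s < 0) :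
    (0 < deriv (deriv tangent) s 3 ∧ tangent s 3 < s * deriv tangent s 3) ∧
      (tangent s 2 = 0 ∧ deriv tangent s 2 = 0 ∧ deriv (deriv tangent) s 2 = 0) := by
  have hs : 0 < -s := neg_pos.mpr h1
  obtain ⟨d2, dd2⟩ := deriv_tangent_apply_two s
  obtain ⟨d3, dd3⟩ := deriv_tangent_apply_three s
  refine ⟨⟨?_, ?_⟩, ?_, ?_, ?_⟩
  · exact dd3 ▸ expNegInvGlue.deriv_deriv_pos hs (by linarith)
  · rw [d3, mul_neg, ← neg_mul]
    exact expNegInvGlue.lt_mul_deriv hs (by linarith)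
  · exact expNegInvGlue.zero_of_nonpos h1.le
  · rw [d2, expNegInvGlue.deriv_of_neg h1]
  · rw [dd2, expNegInvGlue.deriv_deriv_of_neg h1]

theorem not_admitsF_curve : ¬ AdmitsF univ curve := by
  rintro ⟨Z₁, Z₂, Z₃, x₁, x₂, x₃, ⟨-, hZ₂, -, horth⟩, ⟨hx₁, -, -⟩, hF⟩
  simp only [deriv_curve, mem_univ, forall_const] at horth hF
  have hx₁0 (s : ℝ) : x₁ s ≠ 0 := fun h0 => by
    simpa [h0, (tangent_coords_one s).2.1] using congrFun (hF s).1 1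
  have hZ₁ : Z₁ = fun t => (x₁ t)⁻¹ • deriv tangent t :=
    funext fun t => by rw [(hF t).1, inv_smul_smul₀ (hx₁0 t)]
  have hx₁d : Differentiable ℝ x₁ := (contDiffOn_univ.mp hx₁).differentiable (by simp)
  have hZ₂k {s : ℝ} {j k : Fin 4}
      (hj : 0 < deriv (deriv tangent) s j ∧ tangent s j < s * deriv tangent s j)
      (hk : tangent s k = 0 ∧ deriv tangent s k = 0 ∧ deriv (deriv tangent) s k = 0) :
      Z₂ s k = 0 :=
    apply_eq_zero_of_deriv_inv_smul_deriv (differentiable_deriv_tangent s) (hx₁d s) (hx₁0 s)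
      (hZ₁ ▸ (hF s).2.1) (tangent_coords_one s) hj hk
  have hZ₂c : Continuous Z₂ := (contDiffOn_univ.mp hZ₂).continuous
  have h3 : Z₂ 0 3 = 0 := by
    have h : EqOn (fun s => Z₂ s 3) 0 (Ioo 0 (1 / 2)) := fun s hs =>
      hZ₂k (tangent_coords_of_pos hs.1 hs.2).1 (tangent_coords_of_pos hs.1 hs.2).2
    exact h.closure (by fun_prop) continuous_const
      (by rw [closure_Ioo (by norm_num)]; norm_num)
  have h2 : Z₂ 0 2 = 0 := by
    have h : EqOn (fun s => Z₂ s 2) 0 (Ioo (-(1 / 2)) 0) := fun s hs =>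
      hZ₂k (tangent_coords_of_neg hs.1 hs.2).1 (tangent_coords_of_neg hs.1 hs.2).2
    exact h.closure (by fun_prop) continuous_const
      (by rw [closure_Ioo (by norm_num)]; norm_num)
  obtain ⟨-, hZ₂Z₂, -, hZ₁Z₂, -, -, -, hTZ₂, -⟩ := horth 0
  have h0 : Z₂ 0 0 = 0 := by simpa [mink, tangent_zero, h2, h3] using hTZ₂
  have h1 : Z₂ 0 1 = 0 := by
    simpa [mink, hZ₁, h0, h2, h3, (tangent_coords_one 0).2.1, hx₁0 0] using hZ₁Z₂
  simp [mink, h0, h1, h2, h3] at hZ₂Z₂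

end TypeFCounterexample

/-- there is a 2-regular time-like curve parametrized by proper time that
does not admit a generalized Bishop frame of type F. -/
theorem stmt_6 :
    ∃ (I : Set ℝ) (γ : ℝ → Fin 4 → ℝ), IsOpen I ∧ I.OrdConnected ∧ I.Nonempty ∧
      ProperTime I γ ∧ (∀ s ∈ I, deriv (deriv γ) s ≠ 0) ∧ ¬ AdmitsF I γ := by
  open TypeFCounterexample in
  refine ⟨univ, curve, isOpen_univ, ordConnected_univ, univ_nonempty,
    ⟨contDiff_curve.contDiffOn, fun s _ => deriv_curve ▸ mink_tangent_self s⟩,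
    fun s _ h => ?_, not_admitsF_curve⟩
  simpa [deriv_curve, (tangent_coords_one s).2.1] using congrFun h 1
end
end
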